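/- Let G = A^t ⋊ H where A is a finite faithful irreducible H-module and t ≥ 1, written G = (A_1 × ... × A_t) ⋊ H with each A_i ≅_H A. For each i, the subgroup M_i = (∏_{j≠i} A_j) ⋊ H is a maximal subgroup of G, and ∩_{i≤t−1} M_i ≅ A ⋊ H. -/

import Mathlib

namespace Stmt16

/-- The action of `H` on `A` by additive automorphisms, packaged as a homomorphism
`H →* MulAut (Multiplicative A)`, used to form the semidirect product `A ⋊ H`. -/
def mulAutOfSMul (H A : Type*) [Group H] [AddCommGroup A] [DistribMulAction H A] :
    H →* MulAut (Multiplicative A) where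
  toFun h :=
    { toFun := fun a => Multiplicative.ofAdd (h • a.toAdd)
      invFun := fun a => Multiplicative.ofAdd (h⁻¹ • a.toAdd)
      left_inv := fun a => by simp
      right_inv := fun a => by simp
      map_mul' := fun a b => by simp [smul_add, ofAdd_add] }
  map_one' := by ext a; simp
  map_mul' g h := by ext a; simp [mul_smul]

/-!
A subgroup `K` of `G = A^t ⋊ H` containing `M_i` contains `H`, so it is determined by the
`H`-submodule `W = {a | single i a ∈ K}` of `A`: `g ∈ K ↔ g.left i ∈ W`. Irreducibility forces
`W = 0` (so `K = M_i`) or `W = A` (so `K = G`). The elements killed by every coordinate but the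
last are exactly the image of the embedding `A ⋊ H → A^t ⋊ H` along the last coordinate.
Below, `coordKer H A i` is `M_i`.
-/

section

open SemidirectProduct

variable {H A ι : Type*} [Group H] [AddCommGroup A] [DistribMulAction H A]

@[simp]
lemma mulAutOfSMul_apply (h : H) (a : Multiplicative A) :
    mulAutOfSMul H A h a = Multiplicative.ofAdd (h • a.toAdd) :=
  rfl

lemma mem_iff_inl_left_mem {N K : Type*} [Group N] [Group K] {φ : K →* MulAut N}
    {S : Subgroup (N ⋊[φ] K)} (hS : ∀ k, inr k ∈ S) {g : N ⋊[φ] K} :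
    g ∈ S ↔ inl g.left ∈ S := by
  conv_lhs => rw [← inl_left_mul_inr_right g]
  exact S.mul_mem_cancel_right (hS _)

local notation "G" => Multiplicative (ι → A) ⋊[mulAutOfSMul H (ι → A)] H

variable (H A) in
def coordKer (i : ι) : Subgroup G where
  carrier := {g | g.left.toAdd i = 0}
  one_mem' := rfl
  mul_mem' {g g'} (hg : g.left.toAdd i = 0) (hg' : g'.left.toAdd i = 0) := by
    change g.left.toAdd i + g.right • g'.left.toAdd i = 0
    rw [hg, hg', smul_zero, add_zero]
  inv_mem' {g} (hg : g.left.toAdd i = 0) := by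
    change g.right⁻¹ • -g.left.toAdd i = 0
    rw [hg, neg_zero, smul_zero]

@[simp]
lemma mem_coordKer {i : ι} {g : G} : g ∈ coordKer H A i ↔ g.left.toAdd i = 0 :=
  Iff.rfl

lemma inr_mem_coordKer (i : ι) (h : H) : inr h ∈ coordKer H A i :=
  rfl

variable [DecidableEq ι]

variable (H) in
def singleSubgroup (S : Subgroup G) (i : ι) : AddSubgroup A :=
  Subgroup.toAddSubgroup' <| S.comap <|
    inl.comp (AddMonoidHom.toMultiplicative (AddMonoidHom.single (fun _ => A) i))

@[simp]
lemma mem_singleSubgroup {S : Subgroup G} {i : ι} {a : A} :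
    a ∈ singleSubgroup H S i ↔ inl (Multiplicative.ofAdd (Pi.single i a)) ∈ S :=
  Iff.rfl

lemma mem_iff_mem_singleSubgroup {S : Subgroup G} {i : ι} (hS : coordKer H A i ≤ S) {g : G} :
    g ∈ S ↔ g.left.toAdd i ∈ singleSubgroup H S i := by
  set v := g.left.toAdd
  have hrest : inl (Multiplicative.ofAdd (v - Pi.single i (v i))) ∈ S :=
    hS (by rw [mem_coordKer, left_inl, toAdd_ofAdd, Pi.sub_apply, Pi.single_eq_same, sub_self])
  have hsplit : inl g.left = inl (Multiplicative.ofAdd (v - Pi.single i (v i))) *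
      (inl (Multiplicative.ofAdd (Pi.single i (v i))) : G) := by
    rw [← map_mul, ← ofAdd_add, sub_add_cancel, ofAdd_toAdd]
  rw [mem_iff_inl_left_mem fun h => hS (inr_mem_coordKer i h), hsplit,
    S.mul_mem_cancel_left hrest, mem_singleSubgroup]

lemma smul_mem_singleSubgroup {S : Subgroup G} {i : ι} (hS : coordKer H A i ≤ S) (h : H) {a : A}
    (ha : a ∈ singleSubgroup H S i) : h • a ∈ singleSubgroup H S i := by
  rw [mem_singleSubgroup] at ha ⊢
  have hh := hS (inr_mem_coordKer i h)
  have hconj := S.mul_mem (S.mul_mem hh ha) (S.inv_mem hh)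
  rwa [← map_inv, ← inl_aut, mulAutOfSMul_apply, toAdd_ofAdd, ← Pi.single_smul'] at hconj

lemma coordKer_ne_top [Nontrivial A] (i : ι) : coordKer H A i ≠ ⊤ := by
  obtain ⟨a, ha⟩ := exists_ne (0 : A)
  intro htop
  have : inl (Multiplicative.ofAdd (Pi.single i a)) ∈ coordKer H A i := htop ▸ Subgroup.mem_top _
  simp [ha] at this

lemma isCoatom_coordKer [Nontrivial A]
    (hirr : ∀ W : AddSubgroup A, (∀ h : H, ∀ a ∈ W, h • a ∈ W) → W = ⊥ ∨ W = ⊤) (i : ι) :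
    IsCoatom (coordKer H A i) := by
  refine ⟨coordKer_ne_top i, fun S hS => ?_⟩
  rcases hirr _ fun h _ => smul_mem_singleSubgroup hS.le h with hbot | htop
  · refine absurd (le_antisymm (fun g hg => ?_) hS.le) hS.ne'
    rwa [mem_iff_mem_singleSubgroup hS.le, hbot, AddSubgroup.mem_bot] at hg
  · exact eq_top_iff.2 fun g _ => (mem_iff_mem_singleSubgroup hS.le).2 (htop ▸ trivial)

variable (H A) in
def singleHom (i : ι) : Multiplicative A ⋊[mulAutOfSMul H A] H →* G :=
  map (AddMonoidHom.toMultiplicative (AddMonoidHom.single (fun _ => A) i)) (MonoidHom.id H)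
    fun h => by ext a; simp [Pi.single_smul']

lemma singleHom_injective (i : ι) : Function.Injective (singleHom H A i) := by
  intro x y hxy
  ext
  · simpa [singleHom] using congrArg (fun g => g.left.toAdd i) hxy
  · simpa [singleHom] using congrArg SemidirectProduct.right hxy

lemma mem_range_singleHom {i : ι} {g : G} :
    g ∈ (singleHom H A i).range ↔ ∀ j ≠ i, g.left.toAdd j = 0 := by
  constructor
  · rintro ⟨x, rfl⟩ j hj
    simp [singleHom, Pi.single_eq_of_ne hj]
  · intro hg
    refine ⟨⟨Multiplicative.ofAdd (g.left.toAdd i), g.right⟩, ?_⟩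
    ext j
    · by_cases hj : j = i
      · subst hj; simp [singleHom]
      · simp [singleHom, Pi.single_eq_of_ne hj, hg j hj]
    · rfl

lemma iInf_coordKer_eq_range_singleHom (i : ι) (p : ι → Prop) (hp : ∀ j, p j ↔ j ≠ i) :
    ⨅ j : {j // p j}, coordKer H A j.1 = (singleHom H A i).range := by
  ext g
  simp only [Subgroup.mem_iInf, mem_coordKer, mem_range_singleHom, Subtype.forall, hp]

end

theorem Mi_maximal_and_inf_iso_general
    (H A : Type*) [Group H] [AddCommGroup A] [Nontrivial A]
    [DistribMulAction H A]
    (hirr : ∀ W : AddSubgroup A, (∀ h : H, ∀ a ∈ W, h • a ∈ W) → W = ⊥ ∨ W = ⊤)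
    (t : ℕ) (ht : 1 ≤ t)
    (M : Fin t → Subgroup (Multiplicative (Fin t → A) ⋊[mulAutOfSMul H (Fin t → A)] H))
    (hM : ∀ (i : Fin t) (g : Multiplicative (Fin t → A) ⋊[mulAutOfSMul H (Fin t → A)] H),
      g ∈ M i ↔ Multiplicative.toAdd g.left i = 0) :
    (∀ i : Fin t, IsCoatom (M i)) ∧
      Nonempty ((↥(⨅ i : {j : Fin t // (j : ℕ) < t - 1}, M i.1)) ≃*
        (Multiplicative A ⋊[mulAutOfSMul H A] H)) := by
  obtain rfl : M = coordKer H A := funext fun i => SetLike.ext (hM i)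
  refine ⟨isCoatom_coordKer hirr, ⟨?_⟩⟩
  let last : Fin t := ⟨t - 1, by omega⟩
  have hinf := iInf_coordKer_eq_range_singleHom (H := H) (A := A) last (fun j => (j : ℕ) < t - 1)
    fun j => by simp only [Ne, Fin.ext_iff, last]; omega
  exact (MulEquiv.subgroupCongr hinf).trans (MonoidHom.ofInjective (singleHom_injective last)).symm

/-- Let `G = A^t ⋊ H = (A₁ × ⋯ × A_t) ⋊ H` with `A` a finite
faithful irreducible `H`-module and `t ≥ 1`.  For each `i`, the subgroup
`M_i = (∏_{j ≠ i} A_j) ⋊ H` is a maximal subgroup of `G`, and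
`M₁ ∩ ⋯ ∩ M_{t-1} ≅ A ⋊ H`. -/
theorem Mi_maximal_and_inf_iso
    (H A : Type*) [Group H] [Finite H] [AddCommGroup A] [Finite A] [Nontrivial A]
    [DistribMulAction H A] [FaithfulSMul H A]
    (hirr : ∀ W : AddSubgroup A, (∀ h : H, ∀ a ∈ W, h • a ∈ W) → W = ⊥ ∨ W = ⊤)
    (t : ℕ) (ht : 1 ≤ t)
    (M : Fin t → Subgroup (Multiplicative (Fin t → A) ⋊[mulAutOfSMul H (Fin t → A)] H))
    (hM : ∀ (i : Fin t) (g : Multiplicative (Fin t → A) ⋊[mulAutOfSMul H (Fin t → A)] H),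
      g ∈ M i ↔ Multiplicative.toAdd g.left i = 0) :
    (∀ i : Fin t, IsCoatom (M i)) ∧
      Nonempty ((↥(⨅ i : {j : Fin t // (j : ℕ) < t - 1}, M i.1)) ≃*
        (Multiplicative A ⋊[mulAutOfSMul H A] H)) :=
  Mi_maximal_and_inf_iso_general H A hirr t ht M hM

end Stmt16
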